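/- Let 𝔑₂(β) be the 3-dimensional algebra with basis e₁, e₂, e₃ and products e₁e₁ = e₃, e₁e₂ = e₃, e₂e₂ = βe₃. Then 𝔑₂(β) is a Zinbiel algebra and every Zinbiel 2-cocycle θ on 𝔑₂(β) with values in ℂ vanishes whenever one of its arguments is e₃; consequently e₃ ∈ Ann(θ) ∩ Ann(𝔑₂(β)) for every cocycle θ, and Z²(𝔑₂(β), ℂ) is spanned by Δ₁₁, Δ₁₂, Δ₂₁, Δ₂₂. -/
import Mathlib


/-- Standard basis vectors of `Fin 3 → ℂ`. -/
noncomputable def e (i : Fin 3) : Fin 3 → ℂ := Pi.single i 1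

/-- Multiplication of `𝔑₂(β)`: `e₁e₁ = e₃`, `e₁e₂ = e₃`, `e₂e₂ = βe₃`. -/
def mulN2 (β : ℂ) (a b : Fin 3 → ℂ) : Fin 3 → ℂ := fun k =>
  if k = 2 then a 0 * b 0 + a 0 * b 1 + β * (a 1 * b 1) else 0

lemma mulN2_eq (β : ℂ) (a b : Fin 3 → ℂ) :
    mulN2 β a b = (a 0 * b 0 + a 0 * b 1 + β * (a 1 * b 1)) • e 2 := by
  funext k
  by_cases hk : k = 2 <;> simp [mulN2, e, Pi.single_apply, hk]

lemma e_apply (i k : Fin 3) : e i k = if k = i then 1 else 0 := by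
  simp [e, Pi.single_apply]

theorem stmt_18 (β : ℂ) :
    (∀ a b c : Fin 3 → ℂ, mulN2 β (mulN2 β a b) c = mulN2 β a (mulN2 β b c + mulN2 β c b)) ∧
    (∀ a : Fin 3 → ℂ, mulN2 β (e 2) a = 0 ∧ mulN2 β a (e 2) = 0) ∧
    (∀ θ : (Fin 3 → ℂ) →ₗ[ℂ] (Fin 3 → ℂ) →ₗ[ℂ] ℂ,
      (∀ a b c : Fin 3 → ℂ, θ (mulN2 β a b) c = θ a (mulN2 β b c + mulN2 β c b)) ↔
      (∀ a : Fin 3 → ℂ, θ (e 2) a = 0 ∧ θ a (e 2) = 0)) := by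
  refine ⟨?_, ?_, ?_⟩
  · intro a b c
    funext k
    by_cases hk : k = 2 <;>
      simp [mulN2, hk]
  · intro a
    constructor <;> (funext k; by_cases hk : k = 2 <;> simp [mulN2, e_apply, hk])
  · intro θ
    constructor
    · intro h a
      -- θ(e0, e2) = 0 and θ(e2, e0) = 0
      have key : ∀ x y c : Fin 3 → ℂ,
          θ (mulN2 β x y) c = (x 0 * y 0 + x 0 * y 1 + β * (x 1 * y 1)) * θ (e 2) c := by
        intro x y c
        rw [mulN2_eq, map_smul]
        simp [smul_eq_mul]
      have key2 : ∀ x b c : Fin 3 → ℂ,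
          θ x (mulN2 β b c + mulN2 β c b) =
            ((b 0 * c 0 + b 0 * c 1 + β * (b 1 * c 1)) +
             (c 0 * b 0 + c 0 * b 1 + β * (c 1 * b 1))) * θ x (e 2) := by
        intro x b c
        rw [mulN2_eq, mulN2_eq, ← add_smul, map_smul]
        simp [smul_eq_mul]
      -- instance 1: a=e0, b=e0, c=e0 : θ(e2,e0) = 2 θ(e0,e2)
      have h1 := h (e 0) (e 0) (e 0)
      rw [key, key2] at h1
      simp [e_apply] at h1
      -- instance 2: a=e0, b=e1, c=e0 : θ(e2,e0) = θ(e0,e2)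
      have h2 := h (e 0) (e 1) (e 0)
      rw [key, key2] at h2
      simp [e_apply] at h2
      have h02 : θ (e 0) (e 2) = 0 := by
        have := h1.symm.trans h2
        linear_combination this
      have h20 : θ (e 2) (e 0) = 0 := by rw [h2, h02]
      constructor
      · -- θ(e2,a) = 0 via a=e0,b=e0,c=a
        have h3 := h (e 0) (e 0) a
        rw [key, key2] at h3
        simp [e_apply] at h3
        rw [h3, h02, mul_zero]
      · -- θ(a,e2) = 0 via x=a,b=e0,c=e0
        have h4 := h a (e 0) (e 0)
        rw [key, key2] at h4
        simp [e_apply] at h4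
        linear_combination a 0 / 2 * h20 - h4 / 2
    · intro h a b c
      rw [mulN2_eq, mulN2_eq, mulN2_eq, ← add_smul, map_smul, map_smul]
      simp [smul_eq_mul, (h c).1, (h a).2, (h (e 2)).1]
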